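/- arXiv:2405.12824 — 8 statements merged into one kernel-verified Lean document; each statement's English description precedes it below -/
import Mathlib

section
/- Let F₂ = ⟨a, b⟩ be the free group of rank 2 and let φ be the automorphism of F₂ × ℤ = ⟨a, b⟩ × ⟨t⟩ determined by φ(a) = at, φ(b) = b, φ(t) = t (i.e. φ(w, n) = (w, σ_a(w) + n) where σ_a(w) is the exponent sum of a in w). Then the fixed subgroup Fix φ = {x ∈ F₂ × ℤ : φ(x) = x} is not finitely generated. -/
/-!
`Fix φ` consists of the pairs `(w, n)` with `σ_a(w) = 0`, so it projects onto `ker σ_a`, and it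
suffices to see that `ker σ_a` is not finitely generated. Sending `a` to the generator of the top
`ℤ` and `b` to `δ_0` maps `F₂` to the wreath product `ℤ ≀ ℤ = (ℤ →₀ ℤ) ⋊ ℤ`, lifting `σ_a`.
On `ker σ_a` this lands in the base and hits every `δ_n` (as the image of `a^n b a^{-n}`), so
`ker σ_a` surjects onto the free abelian group `ℤ →₀ ℤ` of infinite rank.
-/

/-- The fixed subgroup of an endomorphism of a group. -/
def fixedSubgroup {G : Type*} [Group G] (φ : G →* G) : Subgroup G where
  carrier := {g | φ g = g}
  one_mem' := map_one φ
  mul_mem' := by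
    intro a b ha hb
    simp only [Set.mem_setOf_eq, map_mul] at *
    rw [ha, hb]
  inv_mem' := by
    intro a ha
    simp only [Set.mem_setOf_eq, map_inv] at *
    rw [ha]

/-- The exponent-sum-of-`a` homomorphism `F₂ → ℤ`, sending `a ↦ 1`, `b ↦ 0`. -/
noncomputable def expSumA : FreeGroup (Fin 2) →* Multiplicative ℤ :=
  FreeGroup.lift (fun i => if i = 0 then Multiplicative.ofAdd (1 : ℤ) else 1)

open Multiplicative SemidirectProduct

lemma map_fst_fixedSubgroup_eq_ker {G A : Type*} [Group G] [Group A] (χ : G →* A)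
    (φ : G × A →* G × A) (hφ : ∀ g a, φ (g, a) = (g, χ g * a)) :
    (fixedSubgroup φ).map (MonoidHom.fst G A) = χ.ker := by
  ext g
  constructor
  · rintro ⟨⟨g, a⟩, hfix, rfl⟩
    have hfix : (g, χ g * a) = (g, a) := (hφ g a).symm.trans hfix
    simpa using (Prod.ext_iff.mp hfix).2
  · intro hg
    refine ⟨(g, 1), ?_, rfl⟩
    change φ (g, 1) = (g, 1)
    rw [hφ, MonoidHom.mem_ker.mp hg, one_mul]

lemma Finsupp.not_addGroup_fg_of_infinite (α : Type*) [Infinite α] : ¬ AddGroup.FG (α →₀ ℤ) := by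
  rw [← Module.Finite.iff_addGroup_fg]
  exact Module.not_finite_of_infinite_basis Finsupp.basisSingleOne

lemma Subgroup.eq_top_of_forall_ofAdd_single_mem {α : Type*}
    (S : Subgroup (Multiplicative (α →₀ ℤ))) (hS : ∀ a, ofAdd (Finsupp.single a 1) ∈ S) :
    S = ⊤ := by
  refine (Subgroup.eq_top_iff' S).2 fun f => show ofAdd f.toAdd ∈ S from ?_
  induction f.toAdd using Finsupp.induction with
  | zero => exact S.one_mem
  | single_add a n g _ _ hg =>
    rw [ofAdd_add, ← Finsupp.smul_single_one, ofAdd_zsmul]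
    exact S.mul_mem (S.zpow_mem (hS a) n) hg

noncomputable def Finsupp.shiftMulAut {G M : Type*} [AddGroup G] [AddCommMonoid M] :
    Multiplicative G →* MulAut (Multiplicative (G →₀ M)) where
  toFun g := AddEquiv.toMultiplicative (Finsupp.domCongr (Equiv.addLeft g.toAdd))
  map_one' := by ext; simp [Equiv.Perm.one_def]
  map_mul' g h := by ext f x; simp [Equiv.Perm.mul_def]

def SemidirectProduct.leftOfKerRightHom {N G H : Type*} [Group N] [Group G] [Group H]
    {φ : G →* MulAut N} (f : H →* N ⋊[φ] G) : (rightHom.comp f).ker →* N where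
  toFun x := (f x).left
  map_one' := by simp
  map_mul' x y := by
    have : (f x).right = 1 := x.2
    simp [mul_left, this]

noncomputable def wreathRep :
    FreeGroup (Fin 2) →* Multiplicative (ℤ →₀ ℤ) ⋊[Finsupp.shiftMulAut] Multiplicative ℤ :=
  FreeGroup.lift ![inr (ofAdd 1), inl (ofAdd (Finsupp.single 0 1))]

lemma rightHom_comp_wreathRep : rightHom.comp wreathRep = expSumA := by
  ext i
  fin_cases i <;> simp [wreathRep, expSumA]

lemma wreathRep_conj (n : ℤ) :
    wreathRep (FreeGroup.of 0 ^ n * FreeGroup.of 1 * (FreeGroup.of 0 ^ n)⁻¹) =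
      inl (ofAdd (Finsupp.single n 1)) := by
  have hpow : wreathRep (FreeGroup.of 0 ^ n) = inr (ofAdd n) := by
    simp only [map_zpow, wreathRep, FreeGroup.lift_apply_of]
    rw [Matrix.cons_val_zero, ← map_zpow, ← ofAdd_zsmul, smul_eq_mul, mul_one]
  have hb : wreathRep (FreeGroup.of 1) = inl (ofAdd (Finsupp.single 0 1)) := by
    simp [wreathRep]
  rw [map_mul, map_mul, map_inv, hpow, hb, ← map_inv, ← inl_aut]
  simp [Finsupp.shiftMulAut]

lemma leftOfKerRightHom_wreathRep_surjective :
    Function.Surjective (leftOfKerRightHom wreathRep) := by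
  rw [← MonoidHom.range_eq_top]
  refine Subgroup.eq_top_of_forall_ofAdd_single_mem _ fun n => ?_
  have hker : FreeGroup.of 0 ^ n * FreeGroup.of 1 * (FreeGroup.of 0 ^ n)⁻¹ ∈
      (rightHom.comp wreathRep).ker := by
    rw [MonoidHom.mem_ker, MonoidHom.comp_apply, wreathRep_conj n, rightHom_inl]
  exact ⟨⟨_, hker⟩, by simp [leftOfKerRightHom, wreathRep_conj n]⟩

lemma not_fg_ker_expSumA : ¬ Group.FG expSumA.ker := by
  rw [← rightHom_comp_wreathRep]
  intro h
  exact Finsupp.not_addGroup_fg_of_infinite ℤ <| AddGroup.fg_iff_mul_fg.2 <|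
    Group.fg_of_surjective leftOfKerRightHom_wreathRep_surjective

/-- The automorphism `φ` of `F₂ × ℤ` with `φ(a) = at`, `φ(b) = b`, `φ(t) = t`,
i.e. `φ(w, n) = (w, σ_a(w) + n)`, has non-finitely-generated fixed subgroup. -/
theorem fix_not_fg_of_expSum_aut
    (φ : (FreeGroup (Fin 2) × Multiplicative ℤ) ≃* (FreeGroup (Fin 2) × Multiplicative ℤ))
    (hφ : ∀ (w : FreeGroup (Fin 2)) (n : Multiplicative ℤ), φ (w, n) = (w, expSumA w * n)) :
    ¬ (fixedSubgroup φ.toMonoidHom).FG := by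
  rw [← Group.fg_iff_subgroup_fg]
  intro hFG
  apply not_fg_ker_expSumA
  rw [← map_fst_fixedSubgroup_eq_ker expSumA φ.toMonoidHom hφ]
  exact Group.fg_of_surjective
    ((MonoidHom.fst _ _).subgroupMap_surjective (fixedSubgroup φ.toMonoidHom))
end

section
/- Let G be a group with trivial center and let m ≥ 1. Then every automorphism φ of G × ℤ^m has the form φ(g, v) = (ψ(g), α(g) + L v) for all (g, v) ∈ G × ℤ^m, where ψ is an automorphism of G, L is an automorphism of ℤ^m, and α : G → ℤ^m is a homomorphism. -/
/-!
Since `A` is abelian and `G` is centerless, the center of `G × A` is exactly `1 × A`. An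
automorphism `θ` of `G × A` preserves the center, so it maps `1 × A` onto itself; hence the first
component of `θ (g, v)` depends only on `g`. This gives an endomorphism `ψ` of `G`, and the same
construction for `θ⁻¹` inverts it. Restricting `θ` to `1 × A` gives `L`, and `α` is the second
component of `θ` on `G × 1`.
-/

namespace MulEquiv

open Subgroup

variable {G A : Type*} [Group G] [CommGroup A]

theorem fst_apply_one_mk_of_center_eq_bot (hG : center G = ⊥) (θ : G × A ≃* G × A) (v : A) :
    (θ (1, v)).1 = 1 := by
  have hv : (1, v) ∈ center (G × A) := by
    rw [Subgroup.center_prod, hG, CommGroup.center_eq_top]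
    exact ⟨one_mem _, mem_top v⟩
  have h : θ (1, v) ∈ center (G × A) := MulEquivClass.apply_mem_center θ hv
  rw [Subgroup.center_prod, hG] at h
  exact h.1

variable (hG : center G = ⊥) (θ : G × A ≃* G × A)
include hG

theorem fst_apply_eq_fst_apply_mk_one_of_center_eq_bot (x : G × A) : (θ x).1 = (θ (x.1, 1)).1 := by
  calc (θ x).1 = (θ ((x.1, 1) * (1, x.2))).1 := by simp
    _ = (θ (x.1, 1)).1 := by
      rw [map_mul, Prod.fst_mul, fst_apply_one_mk_of_center_eq_bot hG, mul_one]

theorem apply_one_mk_of_center_eq_bot (v : A) : θ (1, v) = (1, (θ (1, v)).2) :=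
  Prod.ext (fst_apply_one_mk_of_center_eq_bot hG θ v) rfl

def prodFstOfCenterEqBot : G ≃* G where
  toFun g := (θ (g, 1)).1
  invFun g := (θ.symm (g, 1)).1
  left_inv g := by
    simp only
    rw [← fst_apply_eq_fst_apply_mk_one_of_center_eq_bot hG θ.symm, symm_apply_apply]
  right_inv g := by
    simp only
    rw [← fst_apply_eq_fst_apply_mk_one_of_center_eq_bot hG θ, apply_symm_apply]
  map_mul' g h := by
    rw [← Prod.fst_mul, ← map_mul, Prod.mk_mul_mk, mul_one]

def prodSndOfCenterEqBot : A ≃* A where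
  toFun v := (θ (1, v)).2
  invFun v := (θ.symm (1, v)).2
  left_inv v := by
    simp only
    rw [← apply_one_mk_of_center_eq_bot hG θ, symm_apply_apply]
  right_inv v := by
    simp only
    rw [← apply_one_mk_of_center_eq_bot hG θ.symm, apply_symm_apply]
  map_mul' v w := by
    rw [← Prod.snd_mul, ← map_mul, Prod.mk_mul_mk, mul_one]

theorem apply_eq_of_center_eq_bot (g : G) (v : A) :
    θ (g, v) = (prodFstOfCenterEqBot hG θ g,
      ((MonoidHom.snd G A).comp ((θ : G × A →* G × A).comp (MonoidHom.inl G A))) g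
         * prodSndOfCenterEqBot hG θ v) := by
  calc θ (g, v) = θ (g, 1) * θ (1, v) := by rw [← map_mul, Prod.mk_mul_mk, mul_one, one_mul]
    _ = _ := by
      rw [apply_one_mk_of_center_eq_bot hG θ, Prod.mk_mul_mk, mul_one]
      rfl

end MulEquiv

theorem aut_of_prod_int_pow_of_centerless_general {G : Type*} [Group G]
    (hG : Subgroup.center G = ⊥) (m : ℕ)
    (φ : (G × Multiplicative (Fin m → ℤ)) ≃* (G × Multiplicative (Fin m → ℤ))) :
    ∃ (ψ : G ≃* G) (L : Multiplicative (Fin m → ℤ) ≃* Multiplicative (Fin m → ℤ))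
      (α : G →* Multiplicative (Fin m → ℤ)),
      ∀ (g : G) (v : Multiplicative (Fin m → ℤ)), φ (g, v) = (ψ g, α g * L v) :=
  ⟨_, _, _, φ.apply_eq_of_center_eq_bot hG⟩

/-- If `G` is centerless, then every automorphism `φ` of `G × ℤᵐ` (`m ≥ 1`) has the form
`φ(g, v) = (ψ(g), α(g) + L v)` for an automorphism `ψ` of `G`, an automorphism `L` of `ℤᵐ`,
and a homomorphism `α : G → ℤᵐ`.  (Here `ℤᵐ` is written multiplicatively.) -/
theorem aut_of_prod_int_pow_of_centerless {G : Type*} [Group G]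
    (hG : Subgroup.center G = ⊥) (m : ℕ) (hm : 1 ≤ m)
    (φ : (G × Multiplicative (Fin m → ℤ)) ≃* (G × Multiplicative (Fin m → ℤ))) :
    ∃ (ψ : G ≃* G) (L : Multiplicative (Fin m → ℤ) ≃* Multiplicative (Fin m → ℤ))
      (α : G →* Multiplicative (Fin m → ℤ)),
      ∀ (g : G) (v : Multiplicative (Fin m → ℤ)), φ (g, v) = (ψ g, α g * L v) :=
  aut_of_prod_int_pow_of_centerless_general hG m φ
end

section
/- Let G be a group. If for every automorphism φ of G × ℤ the fixed subgroup Fix φ is finitely generated, then for every automorphism ψ of G the fixed subgroup Fix ψ is finitely generated. -/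
/-- If `G × ℤ` has FGFP_a, then `G` has FGFP_a. -/
theorem fgfp_of_fgfp_prod_int {G : Type*} [Group G]
    (h : ∀ φ : (G × Multiplicative ℤ) ≃* (G × Multiplicative ℤ),
      (fixedSubgroup φ.toMonoidHom).FG) :
    ∀ ψ : G ≃* G, (fixedSubgroup ψ.toMonoidHom).FG := by
  intro ψ
  have key : fixedSubgroup ψ.toMonoidHom =
      (fixedSubgroup (ψ.prodCongr (MulEquiv.refl (Multiplicative ℤ))).toMonoidHom).map
        (MonoidHom.fst G (Multiplicative ℤ)) := by
    ext g
    constructor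
    · intro hg
      exact ⟨(g, 1), by simp [fixedSubgroup, Prod.ext_iff, MulEquiv.prodCongr]; exact hg, rfl⟩
    · rintro ⟨⟨a, b⟩, ha, rfl⟩
      simp only [fixedSubgroup, Subgroup.mem_mk, Set.mem_setOf_eq, Prod.ext_iff] at ha ⊢
      exact ha.1
  rw [key]
  rw [Subgroup.fg_iff_submonoid_fg]
  have hfg := (Subgroup.fg_iff_submonoid_fg _).mp
    (h (ψ.prodCongr (MulEquiv.refl (Multiplicative ℤ))))
  exact Submonoid.FG.map hfg (MonoidHom.fst G (Multiplicative ℤ))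
end

section
/- Let G be a group. If for every automorphism φ of G × ℤ the fixed subgroup Fix φ is finitely generated, then every group homomorphism α : G → ℤ has finitely generated kernel. -/
/-- If `G × ℤ` has FGFP_a, then every homomorphism `α : G → ℤ` has finitely
generated kernel. -/
theorem ker_fg_of_fgfp_prod_int {G : Type*} [Group G]
    (h : ∀ φ : (G × Multiplicative ℤ) ≃* (G × Multiplicative ℤ),
      (fixedSubgroup φ.toMonoidHom).FG) :
    ∀ α : G →* Multiplicative ℤ, α.ker.FG := by
  intro α
  set φ : (G × Multiplicative ℤ) ≃* (G × Multiplicative ℤ) :=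
    { toFun := fun p => (p.1, α p.1 * p.2)
      invFun := fun p => (p.1, (α p.1)⁻¹ * p.2)
      left_inv := by intro p; simp
      right_inv := by intro p; simp
      map_mul' := by
        intro p q
        simp only [Prod.fst_mul, Prod.snd_mul, map_mul, Prod.mk_mul_mk, Prod.mk.injEq]
        constructor
        · trivial
        · exact mul_mul_mul_comm _ _ _ _ } with hφ
  have key : α.ker = Subgroup.map (MonoidHom.fst G (Multiplicative ℤ))
      (fixedSubgroup φ.toMonoidHom) := by
    ext g
    simp only [MonoidHom.mem_ker, Subgroup.mem_map, MonoidHom.coe_fst]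
    constructor
    · intro hg
      refine ⟨(g, 1), ?_, rfl⟩
      show φ (g, 1) = (g, 1)
      simp [hφ, hg]
    · rintro ⟨⟨g', z⟩, hg', rfl⟩
      have : φ (g', z) = (g', z) := hg'
      simp only [hφ, MulEquiv.coe_mk, Equiv.coe_fn_mk, Prod.mk.injEq] at this
      have := this.2
      exact mul_right_cancel (by rw [this, one_mul])
  rw [key]
  classical
  rcases h φ with ⟨S, hS⟩
  exact ⟨S.image (MonoidHom.fst G (Multiplicative ℤ)),
    by rw [Finset.coe_image, ← MonoidHom.map_closure, hS]⟩
end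

section
/- Let G be a group, m ≥ 1, and let α : G → ℤ^m be a group homomorphism. Then the map φ : G × ℤ^m → G × ℤ^m defined by φ(g, v) = (g, α(g) + v) is an automorphism of G × ℤ^m, with inverse φ⁻¹(g, v) = (g, v − α(g)), and its fixed subgroup is Fix φ = ker α × ℤ^m. In particular, if ker α is not finitely generated then Fix φ is not finitely generated. -/
/-- For a homomorphism `α : G → ℤᵐ` (`m ≥ 1`), the map `φ(g, v) = (g, α(g) + v)` is an
automorphism of `G × ℤᵐ` with inverse `(g, v) ↦ (g, v - α(g))`, its fixed subgroup is
`ker α × ℤᵐ`, and if `ker α` is not finitely generated then neither is `Fix φ`.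
(Here `ℤᵐ` is written multiplicatively.) -/
theorem shear_aut_fixed_subgroup {G : Type*} [Group G] (m : ℕ) (hm : 1 ≤ m)
    (α : G →* Multiplicative (Fin m → ℤ)) :
    ∃ φ : (G × Multiplicative (Fin m → ℤ)) ≃* (G × Multiplicative (Fin m → ℤ)),
      (∀ (g : G) (v : Multiplicative (Fin m → ℤ)), φ (g, v) = (g, α g * v)) ∧
      (∀ (g : G) (v : Multiplicative (Fin m → ℤ)), φ.symm (g, v) = (g, v * (α g)⁻¹)) ∧
      fixedSubgroup φ.toMonoidHom = α.ker.prod ⊤ ∧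
      (¬ α.ker.FG → ¬ (fixedSubgroup φ.toMonoidHom).FG) := by
  set φ : (G × Multiplicative (Fin m → ℤ)) ≃* (G × Multiplicative (Fin m → ℤ)) :=
    { toFun := fun p => (p.1, α p.1 * p.2)
      invFun := fun p => (p.1, p.2 * (α p.1)⁻¹)
      left_inv := by intro p; simp [mul_comm]
      right_inv := by intro p; simp [mul_comm, mul_assoc]
      map_mul' := by
        intro p q
        simp [Prod.mul_def, map_mul, mul_comm, mul_assoc, mul_left_comm] } with hφ
  have heq : fixedSubgroup φ.toMonoidHom = α.ker.prod ⊤ := by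
    ext ⟨g, v⟩
    simp only [fixedSubgroup, Subgroup.mem_mk, Set.mem_setOf_eq, Subgroup.mem_prod,
      MonoidHom.mem_ker, Subgroup.mem_top, and_true]
    constructor
    · intro h
      have h2 : α g * v = v := congrArg Prod.snd h
      have h3 : α g * v = 1 * v := by rw [h2, one_mul]
      exact mul_right_cancel h3
    · intro h
      show (g, α g * v) = (g, v)
      rw [h, one_mul]
  refine ⟨φ, fun g v => rfl, fun g v => rfl, heq, ?_⟩
  intro hk hfg
  apply hk
  rw [heq] at hfg
  have hmap : (α.ker.prod (⊤ : Subgroup (Multiplicative (Fin m → ℤ)))).map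
      (MonoidHom.fst G _) = α.ker := by
    ext g
    simp only [Subgroup.mem_map, Subgroup.mem_prod, Subgroup.mem_top, and_true,
      MonoidHom.coe_fst]
    exact ⟨fun ⟨p, hp, he⟩ => he ▸ hp, fun h => ⟨(g, 1), h, rfl⟩⟩
  classical
  obtain ⟨S, hS⟩ := hfg
  exact ⟨S.image (MonoidHom.fst G _), by
    rw [Finset.coe_image, ← MonoidHom.map_closure, hS, hmap]⟩
end

section
/- Let G be a group and m ≥ 1. If G × ℤ^m has the property that every automorphism has finitely generated fixed subgroup, then for every n with 0 ≤ n ≤ m, the group G × ℤ^n also has the property that every automorphism has finitely generated fixed subgroup. -/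
theorem fixedSubgroup_fg_map {G H : Type*} [Group G] [Group H] {P : Subgroup G}
    (hP : P.FG) (f : G →* H) : (P.map f).FG := by
  classical
  obtain ⟨S, hS⟩ := hP
  exact ⟨S.image f, by rw [Finset.coe_image, ← MonoidHom.map_closure, hS]⟩

theorem fixedSubgroup_conj {G H : Type*} [Group G] [Group H] (e : G ≃* H) (ψ : G →* G) :
    fixedSubgroup ((e.toMonoidHom.comp ψ).comp e.symm.toMonoidHom)
      = (fixedSubgroup ψ).map e.toMonoidHom := by
  ext g
  constructor
  · intro hg
    have hg' : e (ψ (e.symm g)) = g := hg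
    exact ⟨e.symm g, e.injective (by simpa using hg'), by simp⟩
  · rintro ⟨x, hx, rfl⟩
    show e (ψ (e.symm (e x))) = e x
    simp only [MulEquiv.symm_apply_apply]
    rw [show ψ x = x from hx]

/-- the additive equivalence splitting a sum-indexed function space. -/
def sumAddEquiv (n k : ℕ) : ((Fin n → ℤ) × (Fin k → ℤ)) ≃+ ((Fin n ⊕ Fin k) → ℤ) :=
  { (Equiv.sumArrowEquivProdArrow (Fin n) (Fin k) ℤ).symm with
    map_add' := by
      rintro ⟨a, b⟩ ⟨c, d⟩
      funext x
      cases x <;> simp [Equiv.sumArrowEquivProdArrow] }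

/-- If `G × ℤᵐ` has FGFP_a (`m ≥ 1`), then `G × ℤⁿ` has FGFP_a for every `0 ≤ n ≤ m`. -/
theorem fgfp_prod_int_pow_mono {G : Type*} [Group G] (m : ℕ) (hm : 1 ≤ m)
    (h : ∀ φ : (G × Multiplicative (Fin m → ℤ)) ≃* (G × Multiplicative (Fin m → ℤ)),
      (fixedSubgroup φ.toMonoidHom).FG) :
    ∀ n ≤ m, ∀ φ : (G × Multiplicative (Fin n → ℤ)) ≃* (G × Multiplicative (Fin n → ℤ)),
      (fixedSubgroup φ.toMonoidHom).FG := by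
  intro n hn φ
  set k := m - n with hk
  -- additive equivalence (Fin n → ℤ) × (Fin k → ℤ) ≃+ (Fin m → ℤ)
  have hnk : n + k = m := Nat.add_sub_cancel' hn
  let ea : ((Fin n → ℤ) × (Fin k → ℤ)) ≃+ (Fin m → ℤ) :=
    (sumAddEquiv n k).trans
      (AddEquiv.arrowCongr (finSumFinEquiv.trans (finCongr hnk)) (AddEquiv.refl ℤ))
  -- multiplicative version
  let em : (Multiplicative (Fin n → ℤ) × Multiplicative (Fin k → ℤ))
      ≃* Multiplicative (Fin m → ℤ) :=
    ((MulEquiv.prodMultiplicative (Fin n → ℤ) (Fin k → ℤ)).symm).trans (AddEquiv.toMultiplicative ea)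
  -- the big equivalence
  let E : ((G × Multiplicative (Fin n → ℤ)) × Multiplicative (Fin k → ℤ))
      ≃* (G × Multiplicative (Fin m → ℤ)) :=
    (MulEquiv.prodAssoc).trans ((MulEquiv.refl G).prodCongr em)
  -- extend φ by the identity
  let Φ := φ.prodCongr (MulEquiv.refl (Multiplicative (Fin k → ℤ)))
  let ψ := (E.symm.trans Φ).trans E
  have hψ := h ψ
  -- transport back
  have h1 : fixedSubgroup Φ.toMonoidHom = (fixedSubgroup ψ.toMonoidHom).map E.symm.toMonoidHom := by
    rw [← fixedSubgroup_conj E.symm ψ.toMonoidHom]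
    congr 1
    refine MonoidHom.ext fun x => ?_
    simp [ψ]
  have h2 : (fixedSubgroup Φ.toMonoidHom).FG := by
    rw [h1]; exact fixedSubgroup_fg_map hψ _
  have h3 : fixedSubgroup φ.toMonoidHom
      = (fixedSubgroup Φ.toMonoidHom).map
        (MonoidHom.fst (G × Multiplicative (Fin n → ℤ)) (Multiplicative (Fin k → ℤ))) := by
    ext g
    constructor
    · intro hg
      refine ⟨(g, 1), ?_, rfl⟩
      show Φ (g, 1) = (g, 1)
      have : φ g = g := hg
      simp [Φ, MulEquiv.prodCongr, this]
    · rintro ⟨⟨x, b⟩, hx, rfl⟩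
      have : Φ (x, b) = (x, b) := hx
      have : φ x = x := congrArg Prod.fst this
      exact this
  rw [h3]
  exact fixedSubgroup_fg_map h2 _
end

section
/- Let G be a group such that for every m ≥ 1, every automorphism of G × ℤ^m has finitely generated fixed subgroup. Then the derived subgroup [G, G] is finitely generated. -/
section

variable {G M : Type*} [Group G]

lemma fixedSubgroup_refl : fixedSubgroup (MulEquiv.refl G).toMonoidHom = ⊤ :=
  Subgroup.ext fun _ => iff_of_true rfl trivial

variable [CommGroup M]

def prodShear (f : G →* M) : (G × M) ≃* (G × M) where
  toFun p := (p.1, p.2 * f p.1)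
  invFun p := (p.1, p.2 * (f p.1)⁻¹)
  left_inv p := by simp [mul_assoc]
  right_inv p := by simp [mul_assoc]
  map_mul' p q := Prod.ext rfl <| by
    simp only [Prod.fst_mul, Prod.snd_mul, map_mul, mul_mul_mul_comm]

lemma fixedSubgroup_prodShear (f : G →* M) :
    fixedSubgroup (prodShear f).toMonoidHom = f.ker.prod ⊤ := by
  ext p
  change (p.1, p.2 * f p.1) = p ↔ f p.1 = 1 ∧ True
  simp [Prod.ext_iff]

lemma fg_ker_of_fg_fixedSubgroup_prodShear (f : G →* M)
    (hfix : (fixedSubgroup (prodShear f).toMonoidHom).FG) : f.ker.FG := by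
  rw [fixedSubgroup_prodShear, ← Group.fg_iff_subgroup_fg] at hfix
  have : Group.FG (f.ker × (⊤ : Subgroup M)) :=
    Group.fg_of_surjective (f := (Subgroup.prodEquiv _ _).toMonoidHom) (MulEquiv.surjective _)
  exact (Group.fg_iff_subgroup_fg _).mp <|
    Group.fg_of_surjective (f := MonoidHom.fst _ (⊤ : Subgroup M)) Prod.fst_surjective

end

lemma Subgroup.FG.of_le_of_relIndex_ne_zero {G : Type*} [Group G] {H K : Subgroup G}
    (hK : K.FG) (hHK : H ≤ K) (hindex : H.relIndex K ≠ 0) : H.FG := by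
  have : Group.FG K := (Group.fg_iff_subgroup_fg K).mpr hK
  have : (H.subgroupOf K).FiniteIndex := ⟨hindex⟩
  exact (Group.fg_iff_subgroup_fg H).mp <|
    Group.fg_of_surjective (f := (Subgroup.subgroupOfEquivOfLe hHK).toMonoidHom)
      (MulEquiv.surjective _)

lemma MonoidHom.relIndex_ker_ker_comp {G Q M : Type*} [Group G] [Group Q] [Group M]
    {π : G →* Q} (hπ : Function.Surjective π) (F : Q →* M) :
    π.ker.relIndex (F.comp π).ker = Nat.card F.ker := by
  rw [Subgroup.relIndex_ker, ← MonoidHom.comap_ker, Subgroup.map_comap_eq_self_of_surjective hπ]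

lemma AddCommGroup.exists_finite_ker_to_int_pow (A : Type*) [AddCommGroup A] [AddGroup.FG A] :
    ∃ n, ∀ m, n ≤ m → ∃ F : A →+ (Fin m → ℤ), Finite F.ker := by
  classical
  obtain ⟨n, ι, _, p, hp, e, ⟨σ⟩⟩ := AddCommGroup.equiv_free_prod_directSum_zmod A
  have : ∀ i, NeZero (p i ^ e i) := fun i => ⟨pow_ne_zero _ (hp i).ne_zero⟩
  have : Finite (DirectSum ι fun i => ZMod (p i ^ e i)) :=
    inferInstanceAs (Finite (Π₀ i, ZMod (p i ^ e i)))
  let toFree : A →+ (Fin n →₀ ℤ) := (AddMonoidHom.fst _ _).comp σ.toAddMonoidHom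
  have hfinite : Finite toFree.ker := by
    refine Finite.of_injective (fun a => (σ a).2) fun a b hab => ?_
    have hfst (x : toFree.ker) : (σ x).1 = 0 := AddMonoidHom.mem_ker.mp x.2
    exact Subtype.ext (σ.injective (Prod.ext ((hfst a).trans (hfst b).symm) hab))
  refine ⟨n, fun m hnm => ?_⟩
  let embed : (Fin n →₀ ℤ) →+ (Fin m → ℤ) :=
    (Finsupp.linearEquivFunOnFinite ℤ ℤ (Fin m)).toAddMonoidHom.comp
      (Finsupp.mapDomain.addMonoidHom (Fin.castLE hnm))
  have hembed : Function.Injective embed :=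
    (Finsupp.linearEquivFunOnFinite ℤ ℤ (Fin m)).injective.comp
      (Finsupp.mapDomain_injective (Fin.castLE_injective hnm))
  exact ⟨embed.comp toFree, by rwa [AddMonoidHom.ker_comp_of_injective _ _ hembed]⟩

/-- If `G × ℤᵐ` has FGFP_a for every `m ≥ 1`, then the derived subgroup `[G, G]`
is finitely generated. -/
theorem commutator_fg_of_fgfp_prod_int_pow {G : Type*} [Group G]
    (h : ∀ m : ℕ, 1 ≤ m →
      ∀ φ : (G × Multiplicative (Fin m → ℤ)) ≃* (G × Multiplicative (Fin m → ℤ)),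
        (fixedSubgroup φ.toMonoidHom).FG) :
    (commutator G).FG := by
  have : Group.FG (G × Multiplicative (Fin 1 → ℤ)) :=
    ⟨fixedSubgroup_refl (G := G × Multiplicative (Fin 1 → ℤ)) ▸ h 1 le_rfl (.refl _)⟩
  have : Group.FG G := Group.fg_of_surjective
    (f := MonoidHom.fst G (Multiplicative (Fin 1 → ℤ))) Prod.fst_surjective
  have : Group.FG (Abelianization G) :=
    Group.fg_of_surjective (f := Abelianization.of) QuotientGroup.mk_surjective
  obtain ⟨n, hn⟩ := AddCommGroup.exists_finite_ker_to_int_pow (Additive (Abelianization G))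
  obtain ⟨F, hF⟩ := hn (max n 1) (le_max_left n 1)
  let f : G →* Multiplicative (Fin (max n 1) → ℤ) :=
    (AddMonoidHom.toMultiplicativeRight F).comp Abelianization.of
  have hker : f.ker.FG := fg_ker_of_fg_fixedSubgroup_prodShear f (h _ (le_max_right n 1) _)
  refine hker.of_le_of_relIndex_ne_zero (Abelianization.commutator_subset_ker f) ?_
  rw [← Abelianization.ker_of, MonoidHom.relIndex_ker_ker_comp QuotientGroup.mk_surjective]
  exact Nat.card_ne_zero.mpr ⟨inferInstance, hF⟩
end

section
/- Let F₂ = ⟨a, b⟩ be the free group of rank 2. In the group F₂ × ℤ = ⟨a, b⟩ × ⟨t⟩, let H = F₂ × {1} (a finitely generated normal subgroup) and let K = ⟨(a, 0), (b, 1)⟩ (a finitely generated subgroup). Then the intersection H ∩ K, which equals the normal closure of a in F₂, is not finitely generated. Consequently F₂ × ℤ does not have the weakly Howson property. -/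
/-!
`K` is the graph of the exponent sum `σ : F₂ → ℤ` of `b`, so `H ⊓ K = ker σ × 1`, and `ker σ` is the
normal closure of `a` because `F₂ ⧸ ⟨⟨a⟩⟩` is generated by the image of `b`. To see that `ker σ` is
not finitely generated, map `F₂` to the wreath product `ℤ ≀ ℤ = ℤ[T;T⁻¹] ⋊ ℤ` by
`a ↦ (1, 0)`, `b ↦ (0, 1)`. Its `ℤ`-coordinate is `σ`, so on `ker σ` the `ℤ[T;T⁻¹]`-coordinate is a homomorphism, and it sends
`bᵐ a b⁻ᵐ` to `Tᵐ`. A finitely generated subgroup of `ℤ[T;T⁻¹]` has its supports in a fixed finite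
set, so it cannot contain every `Tᵐ`.
-/

/-- A group has the weakly Howson property if the intersection of any two finitely
generated subgroups, one of which is normal, is finitely generated. -/
def WeaklyHowson (G : Type*) [Group G] : Prop :=
  ∀ H K : Subgroup G, H.Normal → H.FG → K.FG → (H ⊓ K).FG

open LaurentPolynomial

section

variable {G G' : Type*} [Group G] [Group G']

theorem Subgroup.FG.map {P : Subgroup G} (h : P.FG) (f : G →* G') : (P.map f).FG := by
  classical
  obtain ⟨S, rfl⟩ := h
  exact ⟨S.image f, by rw [Finset.coe_image, MonoidHom.map_closure]⟩

theorem Subgroup.map_fst_prod_bot (P : Subgroup G) :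
    (P.prod (⊥ : Subgroup G')).map (MonoidHom.fst G G') = P := by
  ext x
  simp [Subgroup.mem_prod]

theorem Subgroup.FG.of_prod_bot {P : Subgroup G} (h : (P.prod (⊥ : Subgroup G')).FG) : P.FG :=
  P.map_fst_prod_bot (G' := G') ▸ h.map _

theorem MonoidHom.top_prod_bot_inf_range_graph (f : G →* G') :
    (⊤ : Subgroup G).prod ⊥ ⊓ ((MonoidHom.id G).prod f).range = f.ker.prod ⊥ := by
  ext ⟨x, y⟩
  simp only [Subgroup.mem_inf, Subgroup.mem_prod, Subgroup.mem_top, Subgroup.mem_bot, true_and,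
    MonoidHom.mem_range, MonoidHom.prod_apply, MonoidHom.id_apply, Prod.mk.injEq, MonoidHom.mem_ker]
  constructor
  · rintro ⟨rfl, x, rfl, hx⟩
    exact ⟨hx, rfl⟩
  · rintro ⟨hx, rfl⟩
    exact ⟨rfl, x, rfl, hx⟩

theorem MonoidHom.ker_eq_of_comp_eq_mk' {N : Subgroup G} [N.Normal] (f : G →* G')
    (g : G' →* G ⧸ N) (hg : g.comp f = QuotientGroup.mk' N) (hN : N ≤ f.ker) : f.ker = N := by
  refine le_antisymm (fun x hx => ?_) hN
  rw [← QuotientGroup.eq_one_iff, ← QuotientGroup.mk'_apply, ← hg, comp_apply, hx, map_one]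

end

theorem LaurentPolynomial.not_fg_of_forall_T_mem {R : Type*} [Ring R] [Nontrivial R]
    {S : AddSubgroup R[T;T⁻¹]} (hS : ∀ n, T n ∈ S) : ¬ S.FG := by
  classical
  rintro ⟨E, rfl⟩
  obtain ⟨m, hm⟩ := Infinite.exists_notMem_finset (E.biUnion fun p => p.coeff.support)
  let coeffAt : R[T;T⁻¹] →+ R :=
    (Finsupp.applyAddHom m).comp AddMonoidAlgebra.coeffAddEquiv.toAddMonoidHom
  have hE : AddSubgroup.closure (E : Set R[T;T⁻¹]) ≤ coeffAt.ker := by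
    refine (AddSubgroup.closure_le _).2 fun p hp => ?_
    exact Finsupp.notMem_support_iff.1 fun h => hm (Finset.mem_biUnion.2 ⟨p, hp, h⟩)
  have hTm : (T m : R[T;T⁻¹]).coeff m = 0 := hE (hS m)
  simp at hTm

noncomputable def mulTPow : Multiplicative ℤ →* MulAut (Multiplicative ℤ[T;T⁻¹]) :=
  (MulAutMultiplicative _).symm.toMonoidHom.comp
    (AddAut.mulLeft.comp (AddMonoidAlgebra.of ℤ ℤ).toHomUnits)

theorem mulTPow_apply (n : Multiplicative ℤ) (p : Multiplicative ℤ[T;T⁻¹]) :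
    mulTPow n p = .ofAdd (T n.toAdd * p.toAdd) := rfl

/-- The wreath product `ℤ ≀ ℤ`, with the lamps encoded as Laurent polynomials. -/
abbrev IntWrInt := Multiplicative ℤ[T;T⁻¹] ⋊[mulTPow] Multiplicative ℤ

namespace FreeGroupFinTwo

open FreeGroup (of lift lift_apply_of ext_hom closure_range_of)
open SemidirectProduct Subgroup

local notation "F₂" => FreeGroup (Fin 2)

def bExponent : F₂ →* Multiplicative ℤ := lift ![1, .ofAdd 1]

theorem bExponent_of_zero : bExponent (of 0) = 1 := lift_apply_of

theorem bExponent_of_one : bExponent (of 1) = .ofAdd 1 := lift_apply_of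

noncomputable def toIntWrInt : F₂ →* IntWrInt := lift ![inl (.ofAdd 1), inr (.ofAdd 1)]

theorem toIntWrInt_of_zero : toIntWrInt (of 0) = inl (.ofAdd 1) := lift_apply_of

theorem toIntWrInt_of_one : toIntWrInt (of 1) = inr (.ofAdd 1) := lift_apply_of

theorem rightHom_comp_toIntWrInt : rightHom.comp toIntWrInt = bExponent :=
  ext_hom _ _ <| Fin.forall_fin_two.2
    ⟨by simp [toIntWrInt_of_zero, bExponent_of_zero], by simp [toIntWrInt_of_one, bExponent_of_one]⟩

theorem toIntWrInt_conj (m : ℤ) :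
    toIntWrInt (of 1 ^ m * of 0 * (of 1 ^ m)⁻¹) = inl (.ofAdd (T m)) := by
  have hb : toIntWrInt (of 1 ^ m) = inr (.ofAdd m) := by
    rw [map_zpow, toIntWrInt_of_one, ← map_zpow, ← ofAdd_zsmul, smul_eq_mul, mul_one]
  rw [map_mul, map_mul, map_inv, hb, toIntWrInt_of_zero, ← map_inv, ← inl_aut, mulTPow_apply]
  simp

theorem ker_bExponent : bExponent.ker = normalClosure {of 0} := by
  refine bExponent.ker_eq_of_comp_eq_mk' (zpowersHom _ (QuotientGroup.mk' _ (of 1)))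
    (ext_hom _ _ <| Fin.forall_fin_two.2 ⟨?_, ?_⟩) (normalClosure_le_normal ?_)
  · rw [MonoidHom.comp_apply, bExponent_of_zero, map_one, eq_comm, QuotientGroup.mk'_apply,
      QuotientGroup.eq_one_iff]
    exact subset_normalClosure rfl
  · simp [bExponent_of_one]
  · simp [bExponent_of_zero]

theorem closure_eq_range_graph_bExponent :
    closure {(of 0, (1 : Multiplicative ℤ)), (of 1, .ofAdd 1)} =
      ((MonoidHom.id F₂).prod bExponent).range := by
  rw [MonoidHom.range_eq_map, ← closure_range_of, MonoidHom.map_closure]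
  congr 1
  ext x
  simp [Fin.exists_fin_two, bExponent_of_zero, bExponent_of_one, eq_comm]

theorem right_toIntWrInt_of_mem_ker {g : F₂} (hg : g ∈ bExponent.ker) :
    (toIntWrInt g).right = 1 := by
  rwa [← rightHom_comp_toIntWrInt] at hg

noncomputable def lampCoord : bExponent.ker →* Multiplicative ℤ[T;T⁻¹] where
  toFun g := (toIntWrInt g).left
  map_one' := by rw [OneMemClass.coe_one, map_one, one_left]
  map_mul' g h := by
    rw [coe_mul, map_mul, mul_left, right_toIntWrInt_of_mem_ker g.2, map_one, MulAut.one_apply]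

theorem conj_mem_ker_bExponent (m : ℤ) : of 1 ^ m * of 0 * (of 1 ^ m)⁻¹ ∈ bExponent.ker := by
  rw [← rightHom_comp_toIntWrInt, MonoidHom.mem_ker, MonoidHom.comp_apply, toIntWrInt_conj,
    rightHom_inl]

theorem not_fg_ker_bExponent : ¬ bExponent.ker.FG := by
  intro hfg
  have : Group.FG bExponent.ker := (Group.fg_iff_subgroup_fg _).2 hfg
  refine not_fg_of_forall_T_mem (S := toAddSubgroup' lampCoord.range) (fun m => ?_) ?_
  · exact ⟨⟨_, conj_mem_ker_bExponent m⟩, congrArg left (toIntWrInt_conj m)⟩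
  · exact (AddSubgroup.fg_iff_mul_fg _).2 ((Group.fg_iff_subgroup_fg _).1 (Group.fg_range _))

end FreeGroupFinTwo

/-- In `F₂ × ℤ = ⟨a, b⟩ × ⟨t⟩`, the subgroups `H = F₂ × 1` (finitely generated and normal)
and `K = ⟨(a, 0), (b, 1)⟩` (finitely generated) intersect in the normal closure of `a`
in `F₂`, which is not finitely generated.  Hence `F₂ × ℤ` is not weakly Howson. -/
theorem F2_prod_int_not_weakly_howson :
    letI F₂ := FreeGroup (Fin 2)
    letI a : F₂ := FreeGroup.of 0
    letI b : F₂ := FreeGroup.of 1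
    letI H : Subgroup (F₂ × Multiplicative ℤ) := (⊤ : Subgroup F₂).prod ⊥
    letI K : Subgroup (F₂ × Multiplicative ℤ) :=
      Subgroup.closure {(a, (1 : Multiplicative ℤ)), (b, Multiplicative.ofAdd (1 : ℤ))}
    H.Normal ∧ H.FG ∧ K.FG ∧
      H ⊓ K = (Subgroup.normalClosure {a}).prod (⊥ : Subgroup (Multiplicative ℤ)) ∧
      ¬ (H ⊓ K).FG ∧
      ¬ WeaklyHowson (F₂ × Multiplicative ℤ) := by
  set H : Subgroup (FreeGroup (Fin 2) × Multiplicative ℤ) := (⊤ : Subgroup _).prod ⊥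
  set K : Subgroup (FreeGroup (Fin 2) × Multiplicative ℤ) :=
    Subgroup.closure {(FreeGroup.of 0, 1), (FreeGroup.of 1, Multiplicative.ofAdd 1)}
  have hH : H.Normal := Subgroup.prod_normal _ _
  have hH_fg : H.FG := Group.FG.out.prod .bot
  have hK_fg : K.FG := ⟨{(FreeGroup.of 0, 1), (FreeGroup.of 1, .ofAdd 1)}, by simp [K]⟩
  have hHK : H ⊓ K = (Subgroup.normalClosure {FreeGroup.of 0}).prod ⊥ := by
    rw [← FreeGroupFinTwo.ker_bExponent, ← MonoidHom.top_prod_bot_inf_range_graph,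
      ← FreeGroupFinTwo.closure_eq_range_graph_bExponent]
  have hHK_fg : ¬ (H ⊓ K).FG := by
    rw [hHK, ← FreeGroupFinTwo.ker_bExponent]
    exact fun h => FreeGroupFinTwo.not_fg_ker_bExponent h.of_prod_bot
  exact ⟨hH, hH_fg, hK_fg, hHK, hHK_fg, fun hW => hHK_fg (hW H K hH hH_fg hK_fg)⟩
end
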